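/- arXiv:1012.2422 — 2 statements merged into one kernel-verified Lean document; each statement's English description precedes it below -/
import Mathlib

section
/- For any 3-break rearrangement r applied to a breakpoint graph, the increase Δ_r c^odd in the number of odd black-gray cycles (cycles containing an odd number of black edges) is even and satisfies |Δ_r c^odd| ≤ 2. -/
open Finset

/-- A genome on a vertex set `V` of gene extremities: a perfect matching,
encoded as a fixed-point-free involution. -/
structure Genome (V : Type*) [Fintype V] [DecidableEq V] where
  perm : Equiv.Perm V
  invol : ∀ v, perm (perm v) = v
  noFix : ∀ v, perm v ≠ v

namespace Genome

variable {V : Type*} [Fintype V] [DecidableEq V]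

/-- Number of vertices whose matching partner differs between `P` and `P'`
(each changed black edge contributes 2 vertices). -/
def changed (P P' : Genome V) : ℕ :=
  (univ.filter fun v => P.perm v ≠ P'.perm v).card

/-- A 2-break changes exactly 2 black edges. -/
def Is2Break (P P' : Genome V) : Prop := changed P P' = 4

/-- A complete 3-break changes exactly 3 black edges. -/
def IsComplete3Break (P P' : Genome V) : Prop := changed P P' = 6

/-- A 3-break changes 2 or 3 black edges. -/
def Is3Break (P P' : Genome V) : Prop := Is2Break P P' ∨ IsComplete3Break P P'

/-- The permutation whose orbits trace the black-gray alternating cycles of the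
breakpoint graph `G(P,Q)`; each alternating cycle with `k` black edges yields
exactly two orbits of size `k`. -/
def sigma (P Q : Genome V) : Equiv.Perm V := Q.perm * P.perm

/-- Number of orbits of a permutation (nontrivial cycles plus fixed points). -/
def orbitsCard (σ : Equiv.Perm V) : ℕ :=
  Multiset.card σ.cycleType + (univ.filter fun v => σ v = v).card

/-- Number of odd-size orbits of a permutation. -/
def oddOrbitsCard (σ : Equiv.Perm V) : ℕ :=
  Multiset.card (σ.cycleType.filter fun k => Odd k) +
    (univ.filter fun v => σ v = v).card

/-- `c P Q`: the number of black-gray cycles in the breakpoint graph `G(P,Q)`. -/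
def c (P Q : Genome V) : ℕ := orbitsCard (sigma P Q) / 2

/-- `cOdd P Q`: the number of black-gray cycles with an odd number of black edges. -/
def cOdd (P Q : Genome V) : ℕ := oddOrbitsCard (sigma P Q) / 2

/-- `cEven P Q`: the number of black-gray cycles with an even number of black edges. -/
def cEven (P Q : Genome V) : ℕ := c P Q - cOdd P Q

/-- Change in the number of black-gray cycles (w.r.t. target `Q`) caused by the
rearrangement turning `A` into `B`. -/
def dC (Q A B : Genome V) : ℤ := (c B Q : ℤ) - (c A Q : ℤ)

def dCOdd (Q A B : Genome V) : ℤ := (cOdd B Q : ℤ) - (cOdd A Q : ℤ)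

def dCEven (Q A B : Genome V) : ℤ := (cEven B Q : ℤ) - (cEven A Q : ℤ)

/-- A transformation of `P` into `Q`: a sequence of genomes starting at `P`,
ending at `Q`, each consecutive pair related by a 3-break. -/
structure Transformation (P Q : Genome V) where
  steps : List (Genome V)
  chain : List.Chain Is3Break P steps
  last_eq : (P :: steps).getLast (List.cons_ne_nil _ _) = Q

namespace Transformation

variable {P Q : Genome V}

/-- The individual rearrangements of a transformation, as pairs (before, after). -/
def pairs (t : Transformation P Q) : List (Genome V × Genome V) :=
  (P :: t.steps).zip t.steps

/-- Length (number of rearrangements) of the transformation. -/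
def len (t : Transformation P Q) : ℕ := t.steps.length

/-- Number of 2-breaks in `t`. -/
def n2 (t : Transformation P Q) : ℕ :=
  t.pairs.countP fun r => r.1.changed r.2 == 4

/-- Number of complete 3-breaks in `t`. -/
def n3 (t : Transformation P Q) : ℕ :=
  t.pairs.countP fun r => r.1.changed r.2 == 6

/-- Total number of breakages (changed black edges) made by `t`. -/
def breakages (t : Transformation P Q) : ℕ :=
  (t.pairs.map fun r => r.1.changed r.2 / 2).sum

/-- Weight of a transformation with complete 3-breaks weighted `α`. -/
noncomputable def W (α : ℝ) (t : Transformation P Q) : ℝ := (t.n2 : ℝ) + α * t.n3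

end Transformation

/-- The 3-break distance: minimum length of a transformation. -/
noncomputable def d3 (P Q : Genome V) : ℕ :=
  sInf {m | ∃ t : Transformation P Q, t.len = m}

/-- The 2-break distance: minimum length of a transformation using only 2-breaks. -/
noncomputable def d2 (P Q : Genome V) : ℕ :=
  sInf {m | ∃ t : Transformation P Q,
    (∀ r ∈ t.pairs, Is2Break r.1 r.2) ∧ t.len = m}

/-- A transformation is optimal if it simultaneously has the shortest length and
makes the smallest number of breakages among all transformations from `P` to `Q`. -/
def IsOptimal {P Q : Genome V} (t : Transformation P Q) : Prop :=
  (∀ t' : Transformation P Q, t.len ≤ t'.len) ∧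
  (∀ t' : Transformation P Q, t.breakages ≤ t'.breakages)

/-- The weighted distance `D_α`. -/
noncomputable def Dist (α : ℝ) (P Q : Genome V) : ℝ :=
  sInf {w | ∃ t : Transformation P Q, Transformation.W α t = w}

end Genome

/-!
The orbits of `sigma P Q = Q.perm * P.perm` are the alternating cycles of `G(P,Q)` traversed in
either direction. Conjugation by the involution `P.perm` inverts `sigma P Q`, so
`c ↦ P.perm * c⁻¹ * P.perm⁻¹` is an involution on its cycles preserving length; it has no fixed
cycle, since a cycle invariant under this reflection would force a fixed point of `P.perm` or of
`Q.perm`. Pairing the cycles shows that the number of odd orbits is congruent to `|V|` mod 4,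
whatever the genomes. A 3-break changes the partner of at most 6 vertices, so `sigma` changes at
most at 6 points and the odd-orbit count moves by at most 6; being fixed mod 4 it moves by 0 or
±4, i.e. `cOdd` moves by 0 or ±2.
-/

open Equiv Equiv.Perm

theorem Finset.sum_modEq_card_filter_odd_of_involution {ι : Type*} (s : Finset ι) (g : ι → ℕ)
    (i : ι → ι) (hi_mem : ∀ a ∈ s, i a ∈ s) (hi_inv : ∀ a ∈ s, i (i a) = a)
    (hi_ne : ∀ a ∈ s, i a ≠ a) (hg : ∀ a ∈ s, g (i a) = g a) :
    ∑ a ∈ s, g a ≡ #{a ∈ s | Odd (g a)} [MOD 4] := by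
  rw [← ZMod.natCast_eq_natCast_iff, ← sub_eq_zero, card_filter]
  push_cast
  rw [← sum_sub_distrib]
  refine sum_involution (fun a _ => i a) (fun a ha => ?_) (fun a ha _ => hi_ne a ha)
    (fun a ha => hi_mem a ha) (fun a ha => hi_inv a ha)
  have h4 : (4 : ZMod 4) = 0 := rfl
  obtain ⟨k, hk | hk⟩ := Nat.even_or_odd' (g a)
  · simp only [hg a ha, hk, Nat.not_odd_iff_even.mpr (even_two_mul k), if_false]
    push_cast
    linear_combination (k : ZMod 4) * h4
  · simp only [hg a ha, hk, odd_two_mul_add_one k, if_true]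
    push_cast
    linear_combination (k : ZMod 4) * h4

theorem Equiv.Perm.IsCycle.exists_apply_eq_self_of_conj_eq_inv {α : Type*} {c τ : Perm α}
    (hc : c.IsCycle) (hτ : ∀ x, τ (τ x) = x) (hτc : τ * c * τ = c⁻¹) :
    ∃ x, τ x = x ∨ c (τ x) = x := by
  obtain ⟨v, hv, -⟩ := id hc
  have hτinv : τ⁻¹ = τ := inv_eq_of_mul_eq_one_right (ext hτ)
  have hτ_zpow (i : ℤ) (x) : τ ((c ^ i) x) = (c ^ (-i)) (τ x) := by
    have hconj : τ * c ^ i * τ = c ^ (-i) := by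
      nth_rw 2 [← hτinv]
      rw [← conj_zpow, hτinv, hτc, inv_zpow']
    rw [← hconj, mul_apply, mul_apply, hτ]
  have hτv : c (τ v) ≠ τ v := by
    intro hfix
    have h := hτ_zpow (-1) v
    rw [zpow_neg_one, neg_neg, zpow_one, hfix] at h
    exact hv (by simpa using congrArg c (τ.injective h).symm)
  obtain ⟨j, hj⟩ := hc.exists_zpow_eq hv hτv
  have hτ_pow (i : ℤ) : τ ((c ^ i) v) = (c ^ (j - i)) v := by
    rw [hτ_zpow, ← hj, ← mul_apply, ← zpow_add, neg_add_eq_sub]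
  obtain ⟨i, rfl | rfl⟩ := Int.even_or_odd' j
  · exact ⟨(c ^ i) v, Or.inl (by rw [hτ_pow]; ring_nf)⟩
  · refine ⟨(c ^ (i + 1)) v, Or.inr ?_⟩
    rw [hτ_pow, ← mul_apply, ← zpow_one_add]
    ring_nf

theorem Equiv.Perm.inv_mem_cycleFactorsFinset_inv {α : Type*} [Fintype α] [DecidableEq α]
    {σ c : Perm α} (hc : c ∈ σ.cycleFactorsFinset) : c⁻¹ ∈ σ⁻¹.cycleFactorsFinset := by
  rw [mem_cycleFactorsFinset_iff] at hc ⊢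
  refine ⟨hc.1.inv, fun a ha => ?_⟩
  have hb : c⁻¹ a ∈ c.support := by
    rw [← support_inv]
    exact apply_mem_support.mpr ha
  rw [eq_comm, inv_eq_iff_eq, ← hc.2 _ hb]
  simp

namespace Genome

variable {V : Type*} [Fintype V] [DecidableEq V]

theorem perm_mul_self (P : Genome V) : P.perm * P.perm = 1 := Equiv.ext P.invol

theorem perm_inv (P : Genome V) : P.perm⁻¹ = P.perm :=
  inv_eq_of_mul_eq_one_right P.perm_mul_self

@[simp]
theorem perm_mul_perm_mul (P : Genome V) (x : Perm V) : P.perm * (P.perm * x) = x := by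
  rw [← mul_assoc, perm_mul_self, one_mul]

theorem perm_mul_sigma_inv_mul_perm_inv (P Q : Genome V) :
    P.perm * (sigma P Q)⁻¹ * P.perm⁻¹ = sigma P Q := by
  simp [sigma, perm_inv]

def reverseCycle (P : Genome V) (c : Perm V) : Perm V := P.perm * c⁻¹ * P.perm⁻¹

theorem reverseCycle_reverseCycle (P : Genome V) (c : Perm V) :
    P.reverseCycle (P.reverseCycle c) = c := by
  simp [reverseCycle, perm_inv, mul_assoc, perm_mul_self]

theorem card_support_reverseCycle (P : Genome V) (c : Perm V) :
    #(P.reverseCycle c).support = #c.support := by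
  rw [reverseCycle, card_support_conj, support_inv]

theorem reverseCycle_mem_cycleFactorsFinset {P Q : Genome V} {c : Perm V}
    (hc : c ∈ (sigma P Q).cycleFactorsFinset) :
    P.reverseCycle c ∈ (sigma P Q).cycleFactorsFinset := by
  have h := (mem_cycleFactorsFinset_conj (sigma P Q)⁻¹ P.perm c⁻¹).mpr
    (inv_mem_cycleFactorsFinset_inv hc)
  rwa [perm_mul_sigma_inv_mul_perm_inv] at h

theorem reverseCycle_ne {P Q : Genome V} {c : Perm V}
    (hc : c ∈ (sigma P Q).cycleFactorsFinset) : P.reverseCycle c ≠ c := by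
  intro heq
  obtain ⟨hcyc, hσc⟩ := mem_cycleFactorsFinset_iff.mp hc
  have hconj : P.perm * c * P.perm = c⁻¹ := by
    conv_rhs => rw [← heq]
    simp [reverseCycle, perm_inv, mul_assoc]
  obtain ⟨x, hx | hx⟩ := hcyc.exists_apply_eq_self_of_conj_eq_inv P.invol hconj
  · exact P.noFix x hx
  · by_cases hPx : P.perm x ∈ c.support
    · apply Q.noFix x
      calc Q.perm x = sigma P Q (P.perm x) := by simp [sigma, P.invol]
        _ = x := by rw [← hσc _ hPx, hx]
    · exact P.noFix x ((notMem_support.mp hPx).symm.trans hx)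

theorem oddOrbitsCard_eq (σ : Perm V) :
    oddOrbitsCard σ = #{c ∈ σ.cycleFactorsFinset | Odd #c.support} + #{v | σ v = v} := by
  rw [oddOrbitsCard, cycleType_def, Multiset.filter_map, Multiset.card_map]
  rfl

theorem oddOrbitsCard_sigma_modEq (P Q : Genome V) :
    oddOrbitsCard (sigma P Q) ≡ Fintype.card V [MOD 4] := by
  set σ := sigma P Q
  have hpair : ∑ c ∈ σ.cycleFactorsFinset, #c.support
      ≡ #{c ∈ σ.cycleFactorsFinset | Odd #c.support} [MOD 4] :=
    sum_modEq_card_filter_odd_of_involution _ _ P.reverseCycle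
      (fun _ => reverseCycle_mem_cycleFactorsFinset)
      (fun c _ => P.reverseCycle_reverseCycle c) (fun _ => reverseCycle_ne)
      (fun c _ => P.card_support_reverseCycle c)
  have hsum : ∑ c ∈ σ.cycleFactorsFinset, #c.support = #σ.support := by
    rw [← sum_cycleType, cycleType_def]
    rfl
  have hcard : #σ.support + #{v | σ v = v} = Fintype.card V := by
    rw [support, add_comm, card_filter_add_card_filter_not, card_univ]
  rw [oddOrbitsCard_eq, ← hcard, ← hsum]
  exact hpair.symm.add_right _

theorem card_filter_cycleFactorsFinset_le {σ σ' : Perm V} {S : Finset V}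
    (h : ∀ v ∉ S, σ v = σ' v) (p : Perm V → Prop) [DecidablePred p] :
    #{c ∈ σ.cycleFactorsFinset | p c}
      ≤ #{c ∈ σ'.cycleFactorsFinset | p c} + #{v ∈ S | σ v ≠ v} := by
  calc #{c ∈ σ.cycleFactorsFinset | p c}
      ≤ #({c ∈ σ'.cycleFactorsFinset | p c} ∪ {v ∈ S | σ v ≠ v}.image σ.cycleOf) :=
        card_le_card fun c hc => ?_
    _ ≤ #{c ∈ σ'.cycleFactorsFinset | p c} + #({v ∈ S | σ v ≠ v}.image σ.cycleOf) :=
        card_union_le _ _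
    _ ≤ _ := Nat.add_le_add_left card_image_le _
  rw [mem_filter] at hc
  obtain ⟨hcσ, hpc⟩ := hc
  rw [mem_union, mem_filter, mem_image]
  by_cases hmeet : ∃ v ∈ c.support, v ∈ S
  · obtain ⟨v, hvc, hvS⟩ := hmeet
    refine Or.inr ⟨v, mem_filter.mpr ⟨hvS, ?_⟩, (cycle_is_cycleOf hvc hcσ).symm⟩
    exact mem_support.mp (mem_cycleFactorsFinset_support_le hcσ hvc)
  · push Not at hmeet
    obtain ⟨hcyc, hc_agree⟩ := mem_cycleFactorsFinset_iff.mp hcσ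
    refine Or.inl ⟨mem_cycleFactorsFinset_iff.mpr ⟨hcyc, fun v hv => ?_⟩, hpc⟩
    rw [hc_agree v hv, h v (hmeet v hv)]

theorem card_fixed_le {σ σ' : Perm V} {S : Finset V} (h : ∀ v ∉ S, σ v = σ' v) :
    #{v | σ v = v} ≤ #{v | σ' v = v} + #{v ∈ S | σ v = v} := by
  refine (card_le_card fun v hv => ?_).trans (card_union_le _ _)
  simp only [mem_union, mem_filter, mem_univ, true_and] at hv ⊢
  by_cases hvS : v ∈ S
  · exact Or.inr ⟨hvS, hv⟩
  · exact Or.inl (h v hvS ▸ hv)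

theorem oddOrbitsCard_le_add_card {σ σ' : Perm V} {S : Finset V}
    (h : ∀ v ∉ S, σ v = σ' v) : oddOrbitsCard σ ≤ oddOrbitsCard σ' + #S := by
  have hS := card_filter_add_card_filter_not (s := S) (p := fun v => σ v ≠ v)
  simp only [not_not] at hS
  have := card_filter_cycleFactorsFinset_le h (fun c => Odd #c.support)
  have := card_fixed_le h
  rw [oddOrbitsCard_eq, oddOrbitsCard_eq]
  omega

theorem changed_comm (A B : Genome V) : changed A B = changed B A := by
  simp only [changed, ne_comm]

theorem oddOrbitsCard_sigma_le (A B Q : Genome V) :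
    oddOrbitsCard (sigma A Q) ≤ oddOrbitsCard (sigma B Q) + changed A B :=
  oddOrbitsCard_le_add_card fun v hv => by
    simp only [mem_filter, mem_univ, true_and, not_not] at hv
    simp only [sigma, Perm.mul_apply, hv]

theorem changed_le_six {A B : Genome V} (h : Is3Break A B) : changed A B ≤ 6 := by
  rcases h with h | h <;> simp only [Is2Break, IsComplete3Break] at h <;> omega

end Genome

open Genome in
/-- for any 3-break, the change in the number of odd black-gray
cycles is even and has absolute value at most 2. -/
theorem stmt1 {V : Type*} [Fintype V] [DecidableEq V] (Q A B : Genome V)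
    (h : Is3Break A B) :
    Even (dCOdd Q A B) ∧ |dCOdd Q A B| ≤ 2 := by
  have hA := oddOrbitsCard_sigma_modEq A Q
  have hB := oddOrbitsCard_sigma_modEq B Q
  have hAB := oddOrbitsCard_sigma_le A B Q
  have hBA := oddOrbitsCard_sigma_le B A Q
  have h6 := changed_le_six h
  rw [changed_comm] at hBA
  unfold Nat.ModEq at hA hB
  simp only [dCOdd, cOdd, Int.even_iff, abs_le]
  omega
end

section
/- The 2-break distance between two genomes P and Q on the same n genes equals n − c(P,Q), where c(P,Q) is the number of black-gray cycles in the breakpoint graph G(P,Q). -/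
open Finset

/-!
`c P Q` is half the number of cycles of `σ = Q * P`, fixed points included. Every 2-break
replaces `P` by its conjugate `g * P * g` under a transposition `g = (x y)`, which turns `σ` into
`σ * (P x, P y) * (x y)`. Multiplying a permutation by a transposition merges two cycles or splits
one, so a 2-break raises `c` by at most one; as `c Q Q = n`, at least `n - c P Q` 2-breaks are
needed. Conversely, if `P v ≠ Q v`, conjugating `P` by `(P v, Q v)` makes `{v, Q v}` a black
edge: both transpositions split a cycle, `v` and `Q v` become fixed points of `σ`, and `c` grows
by one, so `n - c P Q` 2-breaks suffice.
-/

open Equiv Equiv.Perm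

namespace Setoid

variable {α : Type*}

/-- The equivalence relation generated by `s` and the pair `(a, b)`. -/
def joinPair (s : Setoid α) (a b : α) : Setoid α where
  r x y := s x y ∨ (s x a ∧ s b y) ∨ (s x b ∧ s a y)
  iseqv := by
    refine ⟨fun x => Or.inl (s.refl' x), ?_, ?_⟩
    · rintro x y (h | ⟨h₁, h₂⟩ | ⟨h₁, h₂⟩)
      exacts [Or.inl (s.symm' h), Or.inr (Or.inr ⟨s.symm' h₂, s.symm' h₁⟩),
        Or.inr (Or.inl ⟨s.symm' h₂, s.symm' h₁⟩)]
    · rintro x y z (h | ⟨h₁, h₂⟩ | ⟨h₁, h₂⟩) (h' | ⟨h₁', h₂'⟩ | ⟨h₁', h₂'⟩)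
      all_goals grind [Setoid.trans', Setoid.symm']

theorem le_joinPair (s : Setoid α) (a b : α) : s ≤ s.joinPair a b := fun _ _ => Or.inl

theorem joinPair_rel (s : Setoid α) (a b : α) : s.joinPair a b a b :=
  Or.inr (Or.inl ⟨s.refl' a, s.refl' b⟩)

theorem map_of_le_surjective {s t : Setoid α} (h : s ≤ t) : Function.Surjective (map_of_le h) :=
  Quotient.ind fun x => ⟨⟦x⟧, rfl⟩

variable [Finite α] {s t : Setoid α}

theorem card_quotient_le_of_le (h : s ≤ t) : Nat.card (Quotient t) ≤ Nat.card (Quotient s) :=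
  Nat.card_le_card_of_surjective _ (map_of_le_surjective h)

theorem card_quotient_lt_of_le {a b : α} (h : s ≤ t) (hs : ¬ s a b) (ht : t a b) :
    Nat.card (Quotient t) < Nat.card (Quotient s) := by
  have := Fintype.ofFinite (Quotient s)
  have := Fintype.ofFinite (Quotient t)
  simp only [Nat.card_eq_fintype_card]
  refine Fintype.card_lt_of_surjective_not_injective _ (map_of_le_surjective h) fun hinj => hs ?_
  exact Quotient.exact (@hinj ⟦a⟧ ⟦b⟧ (Quotient.sound ht))

theorem card_quotient_le_card_quotient_joinPair_add_one (s : Setoid α) (a b : α) :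
    Nat.card (Quotient s) ≤ Nat.card (Quotient (s.joinPair a b)) + 1 := by
  have hinj : Set.InjOn (map_of_le (s.le_joinPair a b)) {⟦b⟧}ᶜ := by
    rintro ⟨x⟩ hx ⟨y⟩ hy hxy
    rcases Quotient.exact hxy with h | ⟨-, h⟩ | ⟨h, -⟩
    · exact Quotient.sound h
    · exact absurd (Quotient.sound (s.symm' h)) hy
    · exact absurd (Quotient.sound h) hx
  have hcompl := Set.ncard_compl_add_ncard ({⟦b⟧} : Set (Quotient s))
  have hle := Set.ncard_le_ncard_of_injOn _ (fun _ _ => Set.mem_univ _) hinj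
  rw [Set.ncard_singleton] at hcompl
  rw [Set.ncard_univ] at hle
  omega

end Setoid

namespace Equiv.Perm

section

variable {α : Type*}

theorem sameCycle_setoid_le {σ : Perm α} {s : Setoid α} (h : ∀ x, s x (σ x)) :
    SameCycle.setoid σ ≤ s := by
  have hpow : ∀ (n : ℕ) x, s x ((σ ^ n) x) := by
    intro n
    induction n with
    | zero => exact s.refl'
    | succ n ih => exact fun x => s.trans' (h x) (by rw [pow_succ, mul_apply]; exact ih (σ x))
  rintro x _ ⟨k, rfl⟩
  rcases k.eq_nat_or_neg with ⟨n, rfl | rfl⟩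
  · simpa using hpow n x
  · simpa using s.symm' (hpow n ((σ ^ (-(n : ℤ))) x))

/-- The number of cycles of `σ`, fixed points included. -/
noncomputable def numCycles (σ : Perm α) : ℕ := Nat.card (Quotient (SameCycle.setoid σ))

theorem numCycles_le_card [Finite α] (σ : Perm α) : numCycles σ ≤ Nat.card α :=
  Nat.card_le_card_of_surjective _ Quotient.mk_surjective

theorem numCycles_one : numCycles (1 : Perm α) = Nat.card α := by
  have : SameCycle.setoid (1 : Perm α) = ⊥ := Setoid.ext fun _ _ => sameCycle_one
  rw [numCycles, this, Nat.card_congr Setoid.quotientBotEquiv]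

variable [DecidableEq α]

theorem sameCycle_setoid_mul_swap_le (σ : Perm α) (a b : α) :
    SameCycle.setoid (σ * swap a b) ≤ (SameCycle.setoid σ).joinPair a b := by
  set J := (SameCycle.setoid σ).joinPair a b
  have hswap : ∀ x, J x (swap a b x) := by
    intro x
    rcases eq_or_ne x a with rfl | hxa
    · simpa using Setoid.joinPair_rel _ x b
    rcases eq_or_ne x b with rfl | hxb
    · simpa using J.symm' (Setoid.joinPair_rel _ a x)
    simp [swap_apply_of_ne_of_ne hxa hxb]
  exact sameCycle_setoid_le fun x =>
    J.trans' (hswap x) (Setoid.le_joinPair _ a b (SameCycle.refl σ _).apply_right)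

variable [Finite α]

theorem numCycles_le_numCycles_mul_swap_add_one (σ : Perm α) (a b : α) :
    numCycles σ ≤ numCycles (σ * swap a b) + 1 :=
  (Setoid.card_quotient_le_card_quotient_joinPair_add_one _ a b).trans
    (Nat.add_le_add_right (Setoid.card_quotient_le_of_le (sameCycle_setoid_mul_swap_le σ a b)) 1)

theorem numCycles_lt_numCycles_mul_swap {σ : Perm α} {x : α} (hx : σ x ≠ x) :
    numCycles σ < numCycles (σ * swap (σ x) x) := by
  set τ := σ * swap (σ x) x
  have hτ : τ (σ x) = σ x := by simp [τ, swap_apply_left]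
  have hle : SameCycle.setoid τ ≤ SameCycle.setoid σ := by
    refine sameCycle_setoid_le fun y => sameCycle_apply_right.mpr ?_
    rcases eq_or_ne y (σ x) with rfl | hy
    · simpa using (SameCycle.refl σ x).apply_right.symm
    rcases eq_or_ne y x with rfl | hy'
    · simpa using (SameCycle.refl σ y).apply_right
    simpa [τ, swap_apply_of_ne_of_ne hy hy'] using SameCycle.refl σ y
  refine Setoid.card_quotient_lt_of_le hle (a := σ x) (b := x) ?_
    (SameCycle.refl σ x).apply_right.symm
  exact fun h => hx (h.eq_of_left hτ)

end

variable {α : Type*} [Fintype α] [DecidableEq α]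

theorem image_cycleOf_support (σ : Perm α) :
    σ.support.image σ.cycleOf = σ.cycleFactorsFinset := by
  ext c
  simp only [Finset.mem_image]
  constructor
  · rintro ⟨x, hx, rfl⟩
    exact cycleOf_mem_cycleFactorsFinset_iff.2 hx
  · intro hc
    obtain ⟨x, hx⟩ := (mem_cycleFactorsFinset_iff.1 hc).1.nonempty_support
    exact ⟨x, mem_cycleFactorsFinset_support_le hc hx,
      ((eq_cycleOf_of_mem_cycleFactorsFinset_iff σ c hc x).2 hx).symm⟩

theorem numCycles_eq_card_cycleFactorsFinset_add (σ : Perm α) :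
    numCycles σ = #σ.cycleFactorsFinset + #σ.supportᶜ := by
  let label : α → Perm α ⊕ α := fun x =>
    if x ∈ σ.support then .inl (σ.cycleOf x) else .inr x
  have hker : SameCycle.setoid σ = Setoid.ker label := by
    ext x y
    show σ.SameCycle x y ↔ label x = label y
    by_cases hx : x ∈ σ.support <;> by_cases hy : y ∈ σ.support <;>
      simp only [label, hx, hy, if_true, if_false, Sum.inl.injEq, Sum.inr.injEq, reduceCtorEq]
    · exact sameCycle_iff_cycleOf_eq_of_mem_support hx hy
    · exact iff_false_intro fun h => hy ((SameCycle.mem_support_iff h).1 hx)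
    · exact iff_false_intro fun h => hx ((SameCycle.mem_support_iff h).2 hy)
    · exact ⟨fun h => h.eq_of_left (notMem_support.1 hx), fun h => h ▸ SameCycle.refl σ x⟩
  have hrange : Set.range label = ↑(σ.cycleFactorsFinset.disjSum σ.supportᶜ) := by
    ext (c | y) <;>
      simp only [Set.mem_range, label, Finset.mem_coe, Finset.inl_mem_disjSum,
        Finset.inr_mem_disjSum, ← image_cycleOf_support, Finset.mem_image, Finset.mem_compl] <;>
      grind
  rw [numCycles, hker, Nat.card_congr (Setoid.quotientKerEquivRange label), Nat.card_coe_set_eq,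
    hrange, Set.ncard_coe_finset, card_disjSum]

end Equiv.Perm

namespace Genome

variable {V : Type*} [Fintype V] [DecidableEq V]

theorem ext {A B : Genome V} (h : A.perm = B.perm) : A = B := by
  cases A; cases B; simpa using h

def conj (P : Genome V) (g : Perm V) : Genome V where
  perm := g * P.perm * g⁻¹
  invol v := by simp [P.invol]
  noFix v h := P.noFix (g⁻¹ v) (by rw [Perm.inv_def, Equiv.eq_symm_apply]; exact h)

theorem conj_perm_apply (P : Genome V) (g : Perm V) (v : V) :
    (P.conj g).perm v = g (P.perm (g⁻¹ v)) := rfl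

theorem orbitsCard_eq_numCycles (σ : Perm V) : orbitsCard σ = numCycles σ := by
  have hfix : (univ.filter fun v => σ v = v) = σ.supportᶜ := by
    ext v; simp
  rw [orbitsCard, numCycles_eq_card_cycleFactorsFinset_add, hfix, cycleType_def,
    Multiset.card_map]
  rfl

theorem c_eq_numCycles_div_two (P Q : Genome V) : c P Q = numCycles (sigma P Q) / 2 := by
  rw [c, orbitsCard_eq_numCycles]

theorem c_self {n : ℕ} (hV : Fintype.card V = 2 * n) (Q : Genome V) : c Q Q = n := by
  rw [c_eq_numCycles_div_two, sigma, perm_mul_self, numCycles_one, Nat.card_eq_fintype_card, hV]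
  omega

theorem c_le {n : ℕ} (hV : Fintype.card V = 2 * n) (P Q : Genome V) : c P Q ≤ n := by
  have := numCycles_le_card (sigma P Q)
  rw [Nat.card_eq_fintype_card, hV] at this
  rw [c_eq_numCycles_div_two]
  omega

theorem sigma_conj_swap (A Q : Genome V) (x y : V) :
    sigma (A.conj (swap x y)) Q = sigma A Q * swap (A.perm x) (A.perm y) * swap x y := by
  rw [swap_apply_apply, perm_inv]
  simp only [sigma, conj, swap_inv, mul_assoc, ← mul_assoc A.perm A.perm, perm_mul_self, one_mul]

theorem c_conj_swap_le (A Q : Genome V) (x y : V) : c (A.conj (swap x y)) Q ≤ c A Q + 1 := by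
  have hback : sigma (A.conj (swap x y)) Q * swap x y * swap (A.perm x) (A.perm y) =
      sigma A Q := by
    simp only [sigma_conj_swap, mul_assoc, swap_mul_self, mul_one]
  have h₁ := numCycles_le_numCycles_mul_swap_add_one (sigma (A.conj (swap x y)) Q) x y
  have h₂ := numCycles_le_numCycles_mul_swap_add_one
    (sigma (A.conj (swap x y)) Q * swap x y) (A.perm x) (A.perm y)
  rw [hback] at h₂
  rw [c_eq_numCycles_div_two, c_eq_numCycles_div_two]
  omega

def changedSet (P P' : Genome V) : Finset V := univ.filter fun v => P.perm v ≠ P'.perm v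

theorem changedSet_comm (A B : Genome V) : changedSet A B = changedSet B A := by
  ext; simp [changedSet, ne_comm]

theorem perm_mem_changedSet {A B : Genome V} {z : V} (hz : z ∈ changedSet A B) :
    A.perm z ∈ changedSet A B := by
  simp only [changedSet, mem_filter, mem_univ, true_and, A.invol] at hz ⊢
  exact fun h => hz ((B.invol _).symm.trans (congrArg B.perm h.symm))

theorem perm_mem_changedSet_right {A B : Genome V} {z : V} (hz : z ∈ changedSet A B) :
    B.perm z ∈ changedSet A B := by
  rw [changedSet_comm] at hz ⊢
  exact perm_mem_changedSet hz

theorem changedSet_conj_swap {A : Genome V} {x y : V} (hxy : x ≠ y) (hx : A.perm x ≠ y) :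
    changedSet A (A.conj (swap x y)) = {x, y, A.perm x, A.perm y} := by
  have := A.invol
  have := A.noFix
  have := A.perm.injective
  ext z
  simp only [changedSet, conj_perm_apply, swap_inv, swap_apply_def, mem_insert, mem_singleton]
  grind

theorem is2Break_conj_swap {A : Genome V} {x y : V} (hxy : x ≠ y) (hx : A.perm x ≠ y) :
    Is2Break A (A.conj (swap x y)) := by
  have := A.invol
  have := A.noFix
  have := A.perm.injective
  rw [Is2Break, changed, ← changedSet, changedSet_conj_swap hxy hx]
  rw [card_insert_of_notMem, card_insert_of_notMem, card_pair] <;> grind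

/-- A perfect matching of four points is determined by the partner of any one of them. -/
theorem perm_eqOn_of_card_eq_four {S : Finset V} (hS : #S = 4) {B B' : Genome V}
    (hB : ∀ z ∈ S, B.perm z ∈ S) (hB' : ∀ z ∈ S, B'.perm z ∈ S) {v : V} (hv : v ∈ S)
    (h : B.perm v = B'.perm v) {z : V} (hz : z ∈ S) : B.perm z = B'.perm z := by
  by_cases hzv : z = v
  · rw [hzv, h]
  by_cases hzBv : z = B.perm v
  · rw [hzBv, B.invol, h, B'.invol]
  set R := ((S.erase v).erase (B.perm v)).erase z
  have hR : #R = 1 := by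
    rw [card_erase_of_mem, card_erase_of_mem, card_erase_of_mem hv, hS]
    · exact mem_erase.2 ⟨B.noFix v, hB v hv⟩
    · exact mem_erase.2 ⟨hzBv, mem_erase.2 ⟨hzv, hz⟩⟩
  have hmem : ∀ C : Genome V, B.perm v = C.perm v → C.perm z ∈ S → C.perm z ∈ R := by
    intro C hC hCz
    refine mem_erase.2 ⟨C.noFix z, mem_erase.2 ⟨?_, mem_erase.2 ⟨?_, hCz⟩⟩⟩
    · exact fun e => hzv (C.perm.injective (e.trans hC))
    · exact fun e => hzBv (by rw [hC, ← e, C.invol])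
  obtain ⟨a, ha⟩ := card_eq_one.1 hR
  have h₁ := hmem B rfl (hB z hz)
  have h₂ := hmem B' h (hB' z hz)
  rw [ha, mem_singleton] at h₁ h₂
  rw [h₁, h₂]

theorem exists_eq_conj_swap_of_is2Break {A B : Genome V} (h : Is2Break A B) :
    ∃ x y, B = A.conj (swap x y) := by
  have hS : #(changedSet A B) = 4 := h
  obtain ⟨v, hv⟩ : (changedSet A B).Nonempty := card_pos.1 (by omega)
  have hvB : A.perm v ≠ B.perm v := (mem_filter.1 hv).2
  have hAv : A.perm (A.perm v) ≠ B.perm v := by rw [A.invol]; exact (B.noFix v).symm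
  set B' := A.conj (swap (A.perm v) (B.perm v))
  have hS' : changedSet A B' = changedSet A B := by
    refine eq_of_subset_of_card_le ?_ (hS.trans (is2Break_conj_swap hvB hAv).symm).le
    rw [changedSet_conj_swap hvB hAv, A.invol]
    simp only [insert_subset_iff, singleton_subset_iff]
    exact ⟨perm_mem_changedSet hv, perm_mem_changedSet_right hv, hv,
      perm_mem_changedSet (perm_mem_changedSet_right hv)⟩
  have hB'v : B'.perm v = B.perm v := by
    rw [conj_perm_apply, swap_inv, swap_apply_of_ne_of_ne (A.noFix v).symm (B.noFix v).symm,
      swap_apply_left]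
  refine ⟨A.perm v, B.perm v, ext (Equiv.ext fun z => ?_)⟩
  by_cases hz : z ∈ changedSet A B
  · refine perm_eqOn_of_card_eq_four hS (fun z hz => perm_mem_changedSet_right hz)
      (fun z hz => ?_) hv hB'v.symm hz
    rw [← hS'] at hz ⊢
    exact perm_mem_changedSet_right hz
  · have hz' : z ∉ changedSet A B' := hS' ▸ hz
    simp only [changedSet, mem_filter, mem_univ, true_and, not_not] at hz hz'
    rw [← hz, hz']

theorem c_le_c_add_one_of_is2Break {A B : Genome V} (h : Is2Break A B) (Q : Genome V) :
    c B Q ≤ c A Q + 1 := by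
  obtain ⟨x, y, rfl⟩ := exists_eq_conj_swap_of_is2Break h
  exact c_conj_swap_le A Q x y

theorem exists_is2Break_c_lt {P Q : Genome V} (h : P ≠ Q) :
    ∃ P', Is2Break P P' ∧ c P Q < c P' Q := by
  obtain ⟨v, hv⟩ : ∃ v, P.perm v ≠ Q.perm v := by
    by_contra! h'
    exact h (ext (Equiv.ext h'))
  refine ⟨_, is2Break_conj_swap hv (by rw [P.invol]; exact (Q.noFix v).symm), ?_⟩
  set w := P.perm (Q.perm v) with hw
  have hσw : sigma P Q w = v := by simp [w, sigma, P.invol, Q.invol]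
  have hvw : v ≠ w := fun h => hv ((congrArg P.perm h).trans (P.invol _))
  have hwb : w ≠ P.perm v := fun h => Q.noFix v (P.perm.injective h)
  have hτb : (sigma P Q * swap v w) (P.perm v) = Q.perm v := by
    rw [mul_apply, swap_apply_of_ne_of_ne (P.noFix v) hwb.symm]
    simp [sigma, P.invol]
  have h₁ := numCycles_lt_numCycles_mul_swap (σ := sigma P Q) (x := w) (by rw [hσw]; exact hvw)
  have h₂ : numCycles (sigma P Q * swap v w) <
      numCycles (sigma P Q * swap v w * swap (P.perm v) (Q.perm v)) := by
    have := numCycles_lt_numCycles_mul_swap (x := P.perm v) (hτb ▸ hv.symm)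
    rwa [hτb, swap_comm (Q.perm v)] at this
  rw [hσw] at h₁
  rw [c_eq_numCycles_div_two, c_eq_numCycles_div_two, sigma_conj_swap, P.invol, ← hw]
  omega

namespace Transformation

def refl (Q : Genome V) : Transformation Q Q := ⟨[], List.IsChain.singleton Q, rfl⟩

def cons {P P' Q : Genome V} (h : Is3Break P P') (t : Transformation P' Q) :
    Transformation P Q :=
  ⟨P' :: t.steps, List.IsChain.cons_cons h t.chain, by
    rw [List.getLast_cons (List.cons_ne_nil _ _)]; exact t.last_eq⟩

end Transformation

theorem exists_transformation_of_is2Break {n : ℕ} (hV : Fintype.card V = 2 * n)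
    (Q P : Genome V) : ∃ t : Transformation P Q,
      (∀ r ∈ t.pairs, Is2Break r.1 r.2) ∧ t.len = n - c P Q := by
  suffices ∀ k P, n - c P Q = k → ∃ t : Transformation P Q,
      (∀ r ∈ t.pairs, Is2Break r.1 r.2) ∧ t.len = k from this _ P rfl
  intro k
  induction k with
  | zero =>
    intro P hP
    obtain rfl : P = Q := by
      by_contra hne
      obtain ⟨P', -, hc⟩ := exists_is2Break_c_lt hne
      have := c_le hV P' Q
      omega
    exact ⟨Transformation.refl P, by simp [Transformation.pairs, Transformation.refl], rfl⟩
  | succ k ih =>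
    intro P hP
    have hne : P ≠ Q := by
      rintro rfl
      rw [c_self hV] at hP
      omega
    obtain ⟨P', h2, hc⟩ := exists_is2Break_c_lt hne
    obtain ⟨t, ht, hlen⟩ := ih P' (by have := c_le_c_add_one_of_is2Break h2 Q; omega)
    refine ⟨Transformation.cons (Or.inl h2) t, ?_, by
      simp [Transformation.cons, Transformation.len, ← hlen]⟩
    rintro r (hr | ⟨_, hr⟩)
    exacts [h2, ht r hr]

theorem c_getLast_le (Q : Genome V) (steps : List (Genome V)) (P : Genome V)
    (h : ∀ r ∈ (P :: steps).zip steps, Is2Break r.1 r.2) :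
    c ((P :: steps).getLast (List.cons_ne_nil _ _)) Q ≤ c P Q + steps.length := by
  induction steps generalizing P with
  | nil => simp
  | cons B steps ih =>
    have hPB := c_le_c_add_one_of_is2Break (A := P) (B := B) (h (P, B) (by simp)) Q
    have := ih B fun r hr => h r (by simp [hr])
    rw [List.getLast_cons (List.cons_ne_nil _ _), List.length_cons]
    omega

end Genome

open Genome in
/-- the 2-break distance equals `n - c(P,Q)` for genomes on `n` genes. -/
theorem stmt3 {V : Type*} [Fintype V] [DecidableEq V] (n : ℕ)
    (hV : Fintype.card V = 2 * n) (P Q : Genome V) :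
    (d2 P Q : ℤ) = (n : ℤ) - c P Q := by
  obtain ⟨t, ht, hlen⟩ := exists_transformation_of_is2Break hV Q P
  have hd2 : d2 P Q = n - c P Q := by
    refine IsLeast.csInf_eq ⟨⟨t, ht, hlen⟩, ?_⟩
    rintro m ⟨t', ht', rfl⟩
    have := c_getLast_le Q t'.steps P ht'
    rw [t'.last_eq, c_self hV] at this
    exact Nat.sub_le_of_le_add (this.trans_eq (add_comm _ _))
  rw [hd2, Nat.cast_sub (c_le hV P Q)]
end
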